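/- arXiv:1607.05119 — 7 statements merged into one kernel-verified Lean document; each statement's English description precedes it below -/
import Mathlib

section
/- Define F₀ = F and F_n(x) = ∫_Ω g(ω) F_{n−1}(f(x,ω)) μ(dω) for n ≥ 1. Then for every n ∈ ℕ and all x, z ∈ X, ‖F_n(x) − F_n(z)‖ ≤ L λⁿ ρ(x,z). -/
open MeasureTheory

/-- For the iterates F₀ = F, Fₙ(x) = ∫ g(ω) • F_{n-1}(f(x,ω)) dμ one has
‖Fₙ(x) − Fₙ(z)‖ ≤ L λⁿ ρ(x,z). -/
theorem stmt_4 {Ω : Type*} [MeasurableSpace Ω] (μ : MeasureTheory.Measure Ω)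
    {X : Type*} [MetricSpace X] [TopologicalSpace.SeparableSpace X]
    [MeasurableSpace X] [BorelSpace X]
    {𝕂 : Type*} [RCLike 𝕂]
    {Y : Type*} [NormedAddCommGroup Y] [NormedSpace 𝕂 Y] [NormedSpace ℝ Y] [CompleteSpace Y]
    (f : X → Ω → X) (g : Ω → 𝕂) (F : X → Y) (L : NNReal)
    (hf : ∀ x, Measurable (f x))
    (hg : Integrable g μ)
    (hint : ∀ x, Integrable (fun ω => ‖g ω‖ * dist (f x ω) x) μ)
    (lam : ℝ) (hlam : lam ∈ Set.Ico (0 : ℝ) 1)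
    (hcontr : ∀ x z : X, (∫ ω, ‖g ω‖ * dist (f x ω) (f z ω) ∂μ) ≤ lam * dist x z)
    (hF : LipschitzWith L F)
    (Fseq : ℕ → X → Y)
    (hF0 : Fseq 0 = F)
    (hFn : ∀ n x, Fseq (n + 1) x = ∫ ω, g ω • Fseq n (f x ω) ∂μ)
    (hmeas : ∀ n x, AEStronglyMeasurable (fun ω => g ω • Fseq n (f x ω)) μ) :
    ∀ (n : ℕ) (x z : X), ‖Fseq n x - Fseq n z‖ ≤ (L : ℝ) * lam ^ n * dist x z := by
  intro n
  induction n with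
  | zero =>
    intro x z
    simpa [hF0, dist_eq_norm] using hF.dist_le_mul x z
  | succ n ih =>
    intro x z
    haveI : SecondCountableTopology X := UniformSpace.secondCountable_of_separable X
    have hL0 : (0 : ℝ) ≤ (L : ℝ) * lam ^ n := mul_nonneg L.coe_nonneg (pow_nonneg hlam.1 n)
    have hrhs : (0 : ℝ) ≤ (L : ℝ) * lam ^ (n + 1) * dist x z :=
      mul_nonneg (mul_nonneg L.coe_nonneg (pow_nonneg hlam.1 _)) dist_nonneg
    -- integrability of ‖g‖ * dist (f x ω) (f z ω)
    have hdistInt : Integrable (fun ω => ‖g ω‖ * dist (f x ω) (f z ω)) μ := by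
      have hbd : Integrable (fun ω => ‖g ω‖ * dist (f x ω) x + (‖g ω‖ * dist x z
          + ‖g ω‖ * dist (f z ω) z)) μ :=
        (hint x).add ((hg.norm.mul_const _).add (hint z))
      refine hbd.mono' ?_ ?_
      · exact hg.aestronglyMeasurable.norm.mul
          (((hf x).dist (hf z)).aestronglyMeasurable)
      · refine Filter.Eventually.of_forall fun ω => ?_
        have h1 : dist (f x ω) (f z ω) ≤ dist (f x ω) x + (dist x z + dist (f z ω) z) := by
          calc dist (f x ω) (f z ω) ≤ dist (f x ω) z + dist z (f z ω) := dist_triangle _ _ _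
          _ ≤ (dist (f x ω) x + dist x z) + dist z (f z ω) := by
              gcongr; exact dist_triangle _ _ _
          _ = dist (f x ω) x + (dist x z + dist (f z ω) z) := by
              rw [dist_comm z (f z ω)]; ring
        have := mul_le_mul_of_nonneg_left h1 (norm_nonneg (g ω))
        simpa [Real.norm_eq_abs, abs_of_nonneg (mul_nonneg (norm_nonneg _) dist_nonneg),
          mul_add] using this
    set A : Ω → Y := fun ω => g ω • Fseq n (f x ω) with hA
    set B : Ω → Y := fun ω => g ω • Fseq n (f z ω) with hB
    have hptw : ∀ ω, ‖A ω - B ω‖ ≤ (L : ℝ) * lam ^ n * (‖g ω‖ * dist (f x ω) (f z ω)) := by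
      intro ω
      have : A ω - B ω = g ω • (Fseq n (f x ω) - Fseq n (f z ω)) := by
        simp [hA, hB, smul_sub]
      rw [this, norm_smul]
      calc ‖g ω‖ * ‖Fseq n (f x ω) - Fseq n (f z ω)‖
          ≤ ‖g ω‖ * ((L : ℝ) * lam ^ n * dist (f x ω) (f z ω)) := by
            gcongr; exact ih (f x ω) (f z ω)
        _ = (L : ℝ) * lam ^ n * (‖g ω‖ * dist (f x ω) (f z ω)) := by ring
    have hdiffInt : Integrable (fun ω => A ω - B ω) μ := by
      refine ((hdistInt.const_mul ((L : ℝ) * lam ^ n)).mono'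
        ((hmeas n x).sub (hmeas n z)) ?_)
      refine Filter.Eventually.of_forall fun ω => ?_
      simpa using hptw ω
    by_cases hAInt : Integrable A μ
    · have hBInt : Integrable B μ := by
        have : B = fun ω => A ω - (A ω - B ω) := by funext ω; abel
        rw [this]; exact hAInt.sub hdiffInt
      rw [hFn n x, hFn n z, ← integral_sub hAInt hBInt]
      calc ‖∫ ω, (A ω - B ω) ∂μ‖ ≤ ∫ ω, ‖A ω - B ω‖ ∂μ := norm_integral_le_integral_norm _
        _ ≤ ∫ ω, (L : ℝ) * lam ^ n * (‖g ω‖ * dist (f x ω) (f z ω)) ∂μ := by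
            refine integral_mono hdiffInt.norm (hdistInt.const_mul _)
              fun ω => hptw ω
        _ = (L : ℝ) * lam ^ n * ∫ ω, ‖g ω‖ * dist (f x ω) (f z ω) ∂μ := by
            rw [integral_const_mul]
        _ ≤ (L : ℝ) * lam ^ n * (lam * dist x z) := by
            exact mul_le_mul_of_nonneg_left (hcontr x z) hL0
        _ = (L : ℝ) * lam ^ (n + 1) * dist x z := by ring
    · have hBInt : ¬ Integrable B μ := by
        intro hBInt
        refine hAInt ?_
        have : A = fun ω => (A ω - B ω) + B ω := by funext ω; abel
        rw [this]; exact hdiffInt.add hBInt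
      rw [hFn n x, hFn n z, integral_undef hAInt, integral_undef hBInt]
      simpa using hrhs
end

section
/- With F₀ = F and F_n(x) = ∫_Ω g(ω) F_{n−1}(f(x,ω)) μ(dω), and γ = ∫_Ω g dμ, for all x ∈ X and n ∈ ℕ one has ‖F_n(x) − γ F_{n−1}(x)‖ ≤ L λ^{n−1} ∫_Ω |g(ω)| ρ(f(x,ω), x) μ(dω). -/
open MeasureTheory

/-- ‖Fₙ(x) − γ F_{n−1}(x)‖ ≤ L λ^{n−1} ∫ |g(ω)| ρ(f(x,ω), x) dμ for n ≥ 1. -/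
theorem stmt_5 {Ω : Type*} [MeasurableSpace Ω] (μ : MeasureTheory.Measure Ω)
    {X : Type*} [MetricSpace X] [TopologicalSpace.SeparableSpace X]
    [MeasurableSpace X] [BorelSpace X]
    {𝕂 : Type*} [RCLike 𝕂]
    {Y : Type*} [NormedAddCommGroup Y] [NormedSpace 𝕂 Y] [NormedSpace ℝ Y] [CompleteSpace Y]
    (f : X → Ω → X) (g : Ω → 𝕂) (F : X → Y) (L : NNReal)
    (hf : ∀ x, Measurable (f x))
    (hg : Integrable g μ)
    (hint : ∀ x, Integrable (fun ω => ‖g ω‖ * dist (f x ω) x) μ)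
    (lam : ℝ) (hlam : lam ∈ Set.Ico (0 : ℝ) 1)
    (hcontr : ∀ x z : X, (∫ ω, ‖g ω‖ * dist (f x ω) (f z ω) ∂μ) ≤ lam * dist x z)
    (hF : LipschitzWith L F)
    (γ : 𝕂) (hγ : γ = ∫ ω, g ω ∂μ)
    (Fseq : ℕ → X → Y)
    (hF0 : Fseq 0 = F)
    (hFn : ∀ n x, Fseq (n + 1) x = ∫ ω, g ω • Fseq n (f x ω) ∂μ)
    (hmeas : ∀ n x, AEStronglyMeasurable (fun ω => g ω • Fseq n (f x ω)) μ) :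
    ∀ (x : X) (n : ℕ),
      ‖Fseq (n + 1) x - γ • Fseq n x‖ ≤
        (L : ℝ) * lam ^ n * ∫ ω, ‖g ω‖ * dist (f x ω) x ∂μ := by
  have hlam0 : (0:ℝ) ≤ lam := hlam.1
  have hgnorm : Integrable (fun ω => ‖g ω‖) μ := hg.norm
  haveI : SecondCountableTopology X := UniformSpace.secondCountable_of_separable X
  have key : ∀ n, (∀ a b : X, ‖Fseq n a - Fseq n b‖ ≤ (L:ℝ) * lam ^ n * dist a b) ∧
      (∀ x, Integrable (fun ω => g ω • Fseq n (f x ω)) μ) := by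
    intro n
    induction n with
    | zero =>
      constructor
      · intro a b
        simpa [hF0, dist_eq_norm, mul_comm] using hF.dist_le_mul a b
      · intro x
        refine Integrable.mono' ((hgnorm.const_mul ‖F x‖).add ((hint x).const_mul (L:ℝ)))
          (hmeas 0 x) ?_
        filter_upwards with ω
        rw [norm_smul, hF0]
        have h2 : ‖F (f x ω)‖ - ‖F x‖ ≤ (L:ℝ) * dist (f x ω) x := by
          have := norm_sub_norm_le (F (f x ω)) (F x)
          have hl := hF.dist_le_mul (f x ω) x
          rw [dist_eq_norm] at hl
          linarith
        have hgn : (0:ℝ) ≤ ‖g ω‖ := norm_nonneg _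
        simp only [Pi.add_apply]
        nlinarith [norm_nonneg (F (f x ω))]
    | succ n ih =>
      obtain ⟨ihlip, ihint⟩ := ih
      have Cnn : (0:ℝ) ≤ (L:ℝ) * lam ^ n := by positivity
      have hlip : ∀ a b : X, ‖Fseq (n+1) a - Fseq (n+1) b‖ ≤ (L:ℝ) * lam ^ (n+1) * dist a b := by
        intro a b
        have hsub : Fseq (n+1) a - Fseq (n+1) b
            = ∫ ω, g ω • (Fseq n (f a ω) - Fseq n (f b ω)) ∂μ := by
          rw [hFn, hFn, ← integral_sub (ihint a) (ihint b)]
          simp [smul_sub]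
        have hdint : Integrable (fun ω => ‖g ω‖ * dist (f a ω) (f b ω)) μ := by
          refine Integrable.mono' (((hint a).add (hgnorm.const_mul (dist a b))).add
            (hint b)) (((hg.aestronglyMeasurable.norm).mul
              (((hf a).dist (hf b)).aestronglyMeasurable)))  ?_
          filter_upwards with ω
          have htri : dist (f a ω) (f b ω) ≤ dist (f a ω) a + dist a b + dist (f b ω) b := by
            have := dist_triangle4 (f a ω) a b (f b ω)
            rw [dist_comm (f b ω) b]; linarith
          have hgn : (0:ℝ) ≤ ‖g ω‖ := norm_nonneg _
          have : ‖g ω‖ * dist (f a ω) (f b ω) ≤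
              ‖g ω‖ * (dist (f a ω) a + dist a b + dist (f b ω) b) :=
            mul_le_mul_of_nonneg_left htri hgn
          have hnn : (0:ℝ) ≤ ‖g ω‖ * dist (f a ω) (f b ω) := by positivity
          simp only [Pi.add_apply]
          rw [Real.norm_of_nonneg hnn]
          nlinarith
        rw [hsub]
        have hb : ‖∫ ω, g ω • (Fseq n (f a ω) - Fseq n (f b ω)) ∂μ‖ ≤
            ∫ ω, ((L:ℝ) * lam ^ n) * (‖g ω‖ * dist (f a ω) (f b ω)) ∂μ := by
          refine norm_integral_le_of_norm_le (hdint.const_mul _) ?_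
          filter_upwards with ω
          rw [norm_smul]
          have := mul_le_mul_of_nonneg_left (ihlip (f a ω) (f b ω)) (norm_nonneg (g ω))
          calc ‖g ω‖ * ‖Fseq n (f a ω) - Fseq n (f b ω)‖
              ≤ ‖g ω‖ * ((L:ℝ) * lam ^ n * dist (f a ω) (f b ω)) := this
            _ = (L:ℝ) * lam ^ n * (‖g ω‖ * dist (f a ω) (f b ω)) := by ring
        rw [MeasureTheory.integral_const_mul] at hb
        calc ‖∫ ω, g ω • (Fseq n (f a ω) - Fseq n (f b ω)) ∂μ‖
            ≤ (L:ℝ) * lam ^ n * ∫ ω, ‖g ω‖ * dist (f a ω) (f b ω) ∂μ := hb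
          _ ≤ (L:ℝ) * lam ^ n * (lam * dist a b) :=
              mul_le_mul_of_nonneg_left (hcontr a b) Cnn
          _ = (L:ℝ) * lam ^ (n+1) * dist a b := by ring
      refine ⟨hlip, ?_⟩
      intro x
      refine Integrable.mono' ((hgnorm.const_mul ‖Fseq (n+1) x‖).add
        ((hint x).const_mul ((L:ℝ) * lam ^ (n+1)))) (hmeas (n+1) x) ?_
      filter_upwards with ω
      rw [norm_smul]
      have h2 : ‖Fseq (n+1) (f x ω)‖ - ‖Fseq (n+1) x‖ ≤ (L:ℝ) * lam ^ (n+1) * dist (f x ω) x := by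
        have := norm_sub_norm_le (Fseq (n+1) (f x ω)) (Fseq (n+1) x)
        have hl := hlip (f x ω) x
        linarith
      have hgn : (0:ℝ) ≤ ‖g ω‖ := norm_nonneg _
      simp only [Pi.add_apply]
      nlinarith [norm_nonneg (Fseq (n+1) (f x ω))]
  intro x n
  obtain ⟨hlip, hintg⟩ := key n
  have hsub : Fseq (n+1) x - γ • Fseq n x
      = ∫ ω, g ω • (Fseq n (f x ω) - Fseq n x) ∂μ := by
    have : γ • Fseq n x = ∫ ω, g ω • Fseq n x ∂μ := by
      rw [hγ, integral_smul_const]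
    rw [hFn, this, ← integral_sub (hintg x) (hg.smul_const _)]
    simp [smul_sub]
  rw [hsub]
  have hb : ‖∫ ω, g ω • (Fseq n (f x ω) - Fseq n x) ∂μ‖ ≤
      ∫ ω, ((L:ℝ) * lam ^ n) * (‖g ω‖ * dist (f x ω) x) ∂μ := by
    refine norm_integral_le_of_norm_le ((hint x).const_mul _) ?_
    filter_upwards with ω
    rw [norm_smul]
    calc ‖g ω‖ * ‖Fseq n (f x ω) - Fseq n x‖
        ≤ ‖g ω‖ * ((L:ℝ) * lam ^ n * dist (f x ω) x) :=
          mul_le_mul_of_nonneg_left (hlip (f x ω) x) (norm_nonneg _)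
      _ = (L:ℝ) * lam ^ n * (‖g ω‖ * dist (f x ω) x) := by ring
  rw [MeasureTheory.integral_const_mul] at hb
  exact hb
end

section
/- With F_n as in the iteration and γ = ∫_Ω g dμ ≠ 1, for every x ∈ X the series ∑_{n≥1} (F_n(x) − γ F_{n−1}(x)) converges absolutely in Y, so φ(x) = (1 − γ)^{−1} ( ∑_{n=1}^∞ (F_n(x) − γ F_{n−1}(x)) + F(x) ) is well defined. -/
open MeasureTheory

/-- The series ∑ (Fₙ(x) − γ F_{n−1}(x)) converges absolutely, so the formula for φ
makes sense. -/
theorem stmt_6 {Ω : Type*} [MeasurableSpace Ω] (μ : MeasureTheory.Measure Ω)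
    {X : Type*} [MetricSpace X] [TopologicalSpace.SeparableSpace X]
    [MeasurableSpace X] [BorelSpace X]
    {𝕂 : Type*} [RCLike 𝕂]
    {Y : Type*} [NormedAddCommGroup Y] [NormedSpace 𝕂 Y] [NormedSpace ℝ Y] [CompleteSpace Y]
    (f : X → Ω → X) (g : Ω → 𝕂) (F : X → Y) (L : NNReal)
    (hf : ∀ x, Measurable (f x))
    (hg : Integrable g μ)
    (hint : ∀ x, Integrable (fun ω => ‖g ω‖ * dist (f x ω) x) μ)
    (lam : ℝ) (hlam : lam ∈ Set.Ico (0 : ℝ) 1)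
    (hcontr : ∀ x z : X, (∫ ω, ‖g ω‖ * dist (f x ω) (f z ω) ∂μ) ≤ lam * dist x z)
    (hF : LipschitzWith L F)
    (γ : 𝕂) (hγ : γ = ∫ ω, g ω ∂μ) (hγ1 : γ ≠ 1)
    (Fseq : ℕ → X → Y)
    (hF0 : Fseq 0 = F)
    (hFn : ∀ n x, Fseq (n + 1) x = ∫ ω, g ω • Fseq n (f x ω) ∂μ)
    (hmeas : ∀ n x, AEStronglyMeasurable (fun ω => g ω • Fseq n (f x ω)) μ) :
    ∀ x : X, Summable (fun n : ℕ => ‖Fseq (n + 1) x - γ • Fseq n x‖) ∧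
      Summable (fun n : ℕ => Fseq (n + 1) x - γ • Fseq n x) := by
  obtain ⟨hlam0, hlam1⟩ := hlam
  haveI : SecondCountableTopology X := UniformSpace.secondCountable_of_separable X
  -- integrability of ω ↦ ‖g ω‖ * dist (f y ω) (f z ω)
  have hintd : ∀ y z : X, Integrable (fun ω => ‖g ω‖ * dist (f y ω) (f z ω)) μ := by
    intro y z
    have hms : AEStronglyMeasurable (fun ω => ‖g ω‖ * dist (f y ω) (f z ω)) μ :=
      hg.norm.aestronglyMeasurable.mul ((hf y).dist (hf z)).aestronglyMeasurable
    refine Integrable.mono' (((hint y).add (hg.norm.mul_const (dist y z))).add (hint z)) hms ?_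
    filter_upwards with ω
    have hd : dist (f y ω) (f z ω) ≤ dist (f y ω) y + dist y z + dist (f z ω) z := by
      have h1 := dist_triangle (f y ω) y (f z ω)
      have h2 := dist_triangle y z (f z ω)
      rw [dist_comm (f z ω) z]
      linarith [h1, h2]
    have hgn : (0:ℝ) ≤ ‖g ω‖ := norm_nonneg _
    have := mul_le_mul_of_nonneg_left hd hgn
    rw [Real.norm_of_nonneg (by positivity)]
    simp only [Pi.add_apply]
    nlinarith
  -- given the Lipschitz bound at level n, integrability of the integrand
  have hIntOf : ∀ n : ℕ,
      (∀ y z : X, ‖Fseq n y - Fseq n z‖ ≤ (L : ℝ) * lam ^ n * dist y z) →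
      ∀ y : X, Integrable (fun ω => g ω • Fseq n (f y ω)) μ := by
    intro n hn y
    refine Integrable.mono'
      (((hint y).const_mul ((L : ℝ) * lam ^ n)).add (hg.norm.mul_const ‖Fseq n y‖))
      (hmeas n y) ?_
    filter_upwards with ω
    simp only [Pi.add_apply]
    rw [norm_smul]
    have h1 : ‖Fseq n (f y ω)‖ - ‖Fseq n y‖ ≤ ‖Fseq n (f y ω) - Fseq n y‖ :=
      norm_sub_norm_le _ _
    have h2 := hn (f y ω) y
    have hgn : (0:ℝ) ≤ ‖g ω‖ := norm_nonneg _
    nlinarith [norm_nonneg (Fseq n y)]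
  -- the Lipschitz bound for Fseq n
  have hlip : ∀ n : ℕ, ∀ y z : X, ‖Fseq n y - Fseq n z‖ ≤ (L : ℝ) * lam ^ n * dist y z := by
    intro n
    induction n with
    | zero =>
      intro y z
      simp only [hF0, pow_zero, mul_one]
      rw [← dist_eq_norm]
      exact hF.dist_le_mul y z
    | succ n ih =>
      intro y z
      have hIy := hIntOf n ih y
      have hIz := hIntOf n ih z
      rw [hFn n y, hFn n z, ← integral_sub hIy hIz]
      calc ‖∫ ω, (g ω • Fseq n (f y ω) - g ω • Fseq n (f z ω)) ∂μ‖
          ≤ ∫ ω, ‖g ω • Fseq n (f y ω) - g ω • Fseq n (f z ω)‖ ∂μ :=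
            norm_integral_le_integral_norm _
        _ ≤ ∫ ω, ((L : ℝ) * lam ^ n) * (‖g ω‖ * dist (f y ω) (f z ω)) ∂μ := by
            refine integral_mono (hIy.sub hIz).norm ((hintd y z).const_mul _) ?_
            intro ω
            dsimp only
            rw [← smul_sub, norm_smul]
            have h2 := ih (f y ω) (f z ω)
            have hgn : (0:ℝ) ≤ ‖g ω‖ := norm_nonneg _
            nlinarith
        _ = ((L : ℝ) * lam ^ n) * ∫ ω, ‖g ω‖ * dist (f y ω) (f z ω) ∂μ :=
            integral_const_mul _ _
        _ ≤ ((L : ℝ) * lam ^ n) * (lam * dist y z) := by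
            refine mul_le_mul_of_nonneg_left (hcontr y z) (by positivity)
        _ = (L : ℝ) * lam ^ (n + 1) * dist y z := by ring
  intro x
  set C : ℝ := (L : ℝ) * ∫ ω, ‖g ω‖ * dist (f x ω) x ∂μ with hC
  have hbound : ∀ n : ℕ, ‖Fseq (n + 1) x - γ • Fseq n x‖ ≤ C * lam ^ n := by
    intro n
    have hI := hIntOf n (hlip n) x
    have hI2 : Integrable (fun ω => g ω • Fseq n x) μ := hg.smul_const _
    have hγs : γ • Fseq n x = ∫ ω, g ω • Fseq n x ∂μ := by
      rw [hγ, ← integral_smul_const]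
    rw [hFn n x, hγs, ← integral_sub hI hI2]
    calc ‖∫ ω, (g ω • Fseq n (f x ω) - g ω • Fseq n x) ∂μ‖
        ≤ ∫ ω, ‖g ω • Fseq n (f x ω) - g ω • Fseq n x‖ ∂μ :=
          norm_integral_le_integral_norm _
      _ ≤ ∫ ω, ((L : ℝ) * lam ^ n) * (‖g ω‖ * dist (f x ω) x) ∂μ := by
          refine integral_mono (hI.sub hI2).norm ((hint x).const_mul _) ?_
          intro ω
          dsimp only
          rw [← smul_sub, norm_smul]
          have h2 := hlip n (f x ω) x
          have hgn : (0:ℝ) ≤ ‖g ω‖ := norm_nonneg _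
          nlinarith
      _ = ((L : ℝ) * lam ^ n) * ∫ ω, ‖g ω‖ * dist (f x ω) x ∂μ :=
          integral_const_mul _ _
      _ = C * lam ^ n := by rw [hC]; ring
  have hgeo : Summable (fun n : ℕ => C * lam ^ n) :=
    (summable_geometric_of_lt_one hlam0 hlam1).mul_left C
  have hsn : Summable (fun n : ℕ => ‖Fseq (n + 1) x - γ • Fseq n x‖) :=
    Summable.of_nonneg_of_le (fun n => norm_nonneg _) hbound hgeo
  exact ⟨hsn, hsn.of_norm⟩
end

section
/- If γ = ∫_Ω g dμ ≠ 1, then the equation φ(x) = ∫_Ω g(ω) φ(f(x,ω)) μ(dω) + F(x) has exactly one Lipschitzian solution φ : X → Y, given by φ(x) = (1−γ)^{−1}(∑_{n=1}^∞ (F_n(x) − γ F_{n−1}(x)) + F(x)). -/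
/-!
Write `T u (x) = ∫ g(ω) • u (f x ω) dμ` and `γ = ∫ g dμ`. The contraction hypothesis makes `T`
send `K`-Lipschitz maps to `Kλ`-Lipschitz maps, and for a `K`-Lipschitz `u` the integral
`a(x) = ∫ |g(ω)| ρ(f(x,ω), x) dμ` controls `‖T u x - γ u x‖ ≤ K a(x)`. Hence the terms
`Fₙ₊₁ - γ Fₙ = T Fₙ - γ Fₙ` are bounded by `L λⁿ a(x)` and are Lipschitz with constants of order
`λⁿ`, so their sum `S` is Lipschitz and may be integrated termwise, giving
`T S = S - (F₁ - γ F)`. This is exactly `φ = T φ + F` for `φ = (1 - γ)⁻¹ (S + F)`.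

For uniqueness, the difference `h` of two Lipschitz solutions satisfies `T h = h`, so it is
`Kλⁿ`-Lipschitz for every `n`, hence constant; a constant `c` with `c = γ c` vanishes as `γ ≠ 1`.
-/

open MeasureTheory NNReal

section IntegralCompOp

variable {Ω X 𝕂 Y : Type*} [MeasurableSpace Ω] {μ : Measure Ω} [RCLike 𝕂]
  [NormedAddCommGroup Y] [NormedSpace 𝕂 Y] [NormedSpace ℝ Y] {f : X → Ω → X} {g : Ω → 𝕂}

noncomputable def integralCompOp (μ : Measure Ω) (g : Ω → 𝕂) (f : X → Ω → X) (u : X → Y) :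
    X → Y :=
  fun x => ∫ ω, g ω • u (f x ω) ∂μ

lemma integralCompOp_add {u v : X → Y} {x : X} (hu : Integrable (fun ω => g ω • u (f x ω)) μ)
    (hv : Integrable (fun ω => g ω • v (f x ω)) μ) :
    integralCompOp μ g f (u + v) x = integralCompOp μ g f u x + integralCompOp μ g f v x := by
  simp only [integralCompOp, Pi.add_apply, smul_add, integral_add hu hv]

lemma integralCompOp_sub {u v : X → Y} {x : X} (hu : Integrable (fun ω => g ω • u (f x ω)) μ)
    (hv : Integrable (fun ω => g ω • v (f x ω)) μ) :
    integralCompOp μ g f (u - v) x = integralCompOp μ g f u x - integralCompOp μ g f v x := by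
  simp only [integralCompOp, Pi.sub_apply, smul_sub, integral_sub hu hv]

lemma integralCompOp_smul (c : 𝕂) (u : X → Y) :
    integralCompOp μ g f (c • u) = c • integralCompOp μ g f u := by
  ext x
  simp only [integralCompOp, Pi.smul_apply, smul_comm (g _) c, integral_smul]

lemma integralCompOp_const [CompleteSpace Y] (y : Y) (x : X) :
    integralCompOp μ g f (fun _ => y) x = (∫ ω, g ω ∂μ) • y :=
  integral_smul_const g y

end IntegralCompOp

section Estimates

variable {Ω X 𝕂 Y : Type*} [PseudoMetricSpace X] [RCLike 𝕂] [NormedAddCommGroup Y]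
  [NormedSpace 𝕂 Y] {f : X → Ω → X} {g : Ω → 𝕂}

lemma LipschitzWith.norm_smul_sub_le {u : X → Y} {K : ℝ≥0} (hu : LipschitzWith K u) (c : 𝕂)
    (a b : X) : ‖c • (u a - u b)‖ ≤ K * (‖c‖ * dist a b) := by
  rw [norm_smul, ← dist_eq_norm, mul_left_comm]
  exact mul_le_mul_of_nonneg_left (hu.dist_le_mul a b) (norm_nonneg c)

lemma norm_smul_comp_le {u : X → Y} {K : ℝ≥0} (hu : LipschitzWith K u) (x : X) (ω : Ω) :
    ‖g ω • u (f x ω)‖ ≤ ‖g ω‖ * ‖u x‖ + K * (‖g ω‖ * dist (f x ω) x) := by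
  have hux : ‖u (f x ω)‖ ≤ ‖u x‖ + K * dist (f x ω) x := by
    have := hu.dist_le_mul (f x ω) x
    rw [dist_eq_norm] at this
    linarith [norm_sub_norm_le (u (f x ω)) (u x)]
  rw [norm_smul]
  nlinarith [norm_nonneg (g ω)]

variable [MeasurableSpace Ω] {μ : Measure Ω}

lemma integral_norm_smul_comp_le (hg : Integrable g μ)
    (hint : ∀ x, Integrable (fun ω => ‖g ω‖ * dist (f x ω) x) μ)
    {u : X → Y} {K : ℝ≥0} (hu : LipschitzWith K u) (x : X) :
    ∫ ω, ‖g ω • u (f x ω)‖ ∂μ ≤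
      ‖u x‖ * ∫ ω, ‖g ω‖ ∂μ + K * ∫ ω, ‖g ω‖ * dist (f x ω) x ∂μ := by
  have hbound := (hg.norm.mul_const ‖u x‖).add ((hint x).const_mul (K : ℝ))
  calc ∫ ω, ‖g ω • u (f x ω)‖ ∂μ
      ≤ ∫ ω, ‖g ω‖ * ‖u x‖ + K * (‖g ω‖ * dist (f x ω) x) ∂μ :=
        integral_mono_of_nonneg (.of_forall fun _ => norm_nonneg _) hbound
          (.of_forall (norm_smul_comp_le hu x))
    _ = _ := by
        rw [integral_add (hg.norm.mul_const _) ((hint x).const_mul _), integral_mul_const,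
          integral_const_mul, mul_comm]

variable [MeasurableSpace X] [OpensMeasurableSpace X] [SecondCountableTopology X]

lemma integrable_norm_mul_dist (hf : ∀ x, Measurable (f x)) (hg : Integrable g μ)
    (hint : ∀ x, Integrable (fun ω => ‖g ω‖ * dist (f x ω) x) μ) (p q : X) :
    Integrable (fun ω => ‖g ω‖ * dist (f p ω) (f q ω)) μ := by
  refine Integrable.mono' (((hint p).add (hg.norm.mul_const (dist p q))).add (hint q))
    (hg.norm.aestronglyMeasurable.mul ((hf p).dist (hf q)).aestronglyMeasurable)
    (.of_forall fun ω => ?_)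
  have htri : dist (f p ω) (f q ω) ≤ dist (f p ω) p + dist p q + dist (f q ω) q := by
    simpa [dist_comm] using dist_triangle4 (f p ω) p q (f q ω)
  rw [Real.norm_of_nonneg (by positivity)]
  simp only [Pi.add_apply]
  nlinarith [mul_le_mul_of_nonneg_left htri (norm_nonneg (g ω))]

lemma integrable_smul_comp (hf : ∀ x, Measurable (f x)) (hg : Integrable g μ)
    (hint : ∀ x, Integrable (fun ω => ‖g ω‖ * dist (f x ω) x) μ)
    {u : X → Y} {K : ℝ≥0} (hu : LipschitzWith K u) (x : X) :
    Integrable (fun ω => g ω • u (f x ω)) μ :=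
  Integrable.mono' ((hg.norm.mul_const _).add ((hint x).const_mul _))
    (hg.aestronglyMeasurable.smul
      (hu.continuous.comp_stronglyMeasurable (hf x).stronglyMeasurable).aestronglyMeasurable)
    (.of_forall (norm_smul_comp_le hu x))

variable [NormedSpace ℝ Y]

lemma lipschitzWith_integralCompOp (hf : ∀ x, Measurable (f x)) (hg : Integrable g μ)
    (hint : ∀ x, Integrable (fun ω => ‖g ω‖ * dist (f x ω) x) μ) {lam : ℝ≥0}
    (hcontr : ∀ x z, ∫ ω, ‖g ω‖ * dist (f x ω) (f z ω) ∂μ ≤ lam * dist x z)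
    {u : X → Y} {K : ℝ≥0} (hu : LipschitzWith K u) :
    LipschitzWith (K * lam) (integralCompOp μ g f u) := by
  refine LipschitzWith.of_dist_le_mul fun p q => ?_
  rw [dist_eq_norm, integralCompOp, integralCompOp,
    ← integral_sub (integrable_smul_comp hf hg hint hu p) (integrable_smul_comp hf hg hint hu q)]
  calc ‖∫ ω, g ω • u (f p ω) - g ω • u (f q ω) ∂μ‖
      ≤ ∫ ω, K * (‖g ω‖ * dist (f p ω) (f q ω)) ∂μ := by
        refine norm_integral_le_of_norm_le
          ((integrable_norm_mul_dist hf hg hint p q).const_mul _) (.of_forall fun ω => ?_)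
        rw [← smul_sub]
        exact hu.norm_smul_sub_le _ _ _
    _ ≤ K * (lam * dist p q) := by
        rw [integral_const_mul]
        exact mul_le_mul_of_nonneg_left (hcontr p q) K.coe_nonneg
    _ = ↑(K * lam) * dist p q := by push_cast; ring

lemma lipschitzWith_iterate_integralCompOp (hf : ∀ x, Measurable (f x)) (hg : Integrable g μ)
    (hint : ∀ x, Integrable (fun ω => ‖g ω‖ * dist (f x ω) x) μ) {lam : ℝ≥0}
    (hcontr : ∀ x z, ∫ ω, ‖g ω‖ * dist (f x ω) (f z ω) ∂μ ≤ lam * dist x z)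
    {F : X → Y} {L : ℝ≥0} (hF : LipschitzWith L F) (n : ℕ) :
    LipschitzWith (L * lam ^ n) ((integralCompOp μ g f)^[n] F) := by
  induction n with
  | zero => simpa using hF
  | succ n ih =>
    rw [Function.iterate_succ_apply', pow_succ, ← mul_assoc]
    exact lipschitzWith_integralCompOp hf hg hint hcontr ih

lemma norm_integralCompOp_sub_smul_le (hf : ∀ x, Measurable (f x)) (hg : Integrable g μ)
    (hint : ∀ x, Integrable (fun ω => ‖g ω‖ * dist (f x ω) x) μ)
    [CompleteSpace Y] {u : X → Y} {K : ℝ≥0} (hu : LipschitzWith K u) (x : X) :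
    ‖integralCompOp μ g f u x - (∫ ω, g ω ∂μ) • u x‖ ≤
      K * ∫ ω, ‖g ω‖ * dist (f x ω) x ∂μ := by
  rw [← integralCompOp_const, ← integralCompOp_sub (integrable_smul_comp hf hg hint hu x)
    (hg.smul_const _), ← integral_const_mul]
  refine norm_integral_le_of_norm_le ((hint x).const_mul _) (.of_forall fun ω => ?_)
  exact hu.norm_smul_sub_le _ _ _

end Estimates

lemma LipschitzWith.tsum {ι X Y : Type*} [PseudoMetricSpace X] [NormedAddCommGroup Y]
    {u : ι → X → Y} {K : ι → ℝ≥0} (hu : ∀ i, LipschitzWith (K i) (u i)) (hK : Summable K)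
    (hsum : ∀ x, Summable fun i => u i x) :
    LipschitzWith (∑' i, K i) fun x => ∑' i, u i x := by
  refine LipschitzWith.of_dist_le_mul fun p q => ?_
  have hle : ∀ i, ‖u i p - u i q‖ ≤ K i * dist p q := fun i => by
    rw [← dist_eq_norm]; exact (hu i).dist_le_mul p q
  have hKR' := NNReal.summable_coe.2 hK
  have hKR : Summable fun i => (K i : ℝ) * dist p q := hKR'.mul_right _
  have hnorm : Summable fun i => ‖u i p - u i q‖ :=
    .of_nonneg_of_le (fun _ => norm_nonneg _) hle hKR
  rw [dist_eq_norm, ← (hsum p).tsum_sub (hsum q), NNReal.coe_tsum, ← hKR'.tsum_mul_right]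
  exact (norm_tsum_le_tsum_norm hnorm).trans (hnorm.tsum_le_tsum hle hKR)

lemma apply_eq_of_forall_lipschitzWith_mul_pow {X Y : Type*} [PseudoMetricSpace X] [MetricSpace Y]
    {h : X → Y} {K lam : ℝ≥0} (hlam : lam < 1) (hh : ∀ n, LipschitzWith (K * lam ^ n) h)
    (p q : X) : h p = h q := by
  have hto : Filter.Tendsto (fun n : ℕ => (K : ℝ) * lam ^ n * dist p q) Filter.atTop
      (nhds 0) := by
    simpa using ((tendsto_pow_atTop_nhds_zero_of_lt_one lam.coe_nonneg hlam).const_mul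
      (K : ℝ)).mul_const (dist p q)
  refine dist_le_zero.1 (ge_of_tendsto' hto fun n => ?_)
  simpa using (hh n).dist_le_mul p q

section FunctionalEquation

variable {Ω X 𝕂 Y : Type*} [MeasurableSpace Ω] {μ : Measure Ω}
  [PseudoMetricSpace X] [MeasurableSpace X] [OpensMeasurableSpace X] [SecondCountableTopology X]
  [RCLike 𝕂] [NormedAddCommGroup Y] [NormedSpace 𝕂 Y] [NormedSpace ℝ Y]
  {f : X → Ω → X} {g : Ω → 𝕂}

noncomputable def seriesTerm (μ : Measure Ω) (g : Ω → 𝕂) (f : X → Ω → X) (F : X → Y) (n : ℕ) :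
    X → Y :=
  (integralCompOp μ g f)^[n + 1] F - (∫ ω, g ω ∂μ) • (integralCompOp μ g f)^[n] F

/-- The paper's explicit solution `(1 - γ)⁻¹ (∑ₙ (Fₙ₊₁ - γ Fₙ) + F)`, with `Fₙ = T^[n] F`. -/
noncomputable def seriesSolution (μ : Measure Ω) (g : Ω → 𝕂) (f : X → Ω → X) (F : X → Y) :
    X → Y :=
  (1 - ∫ ω, g ω ∂μ)⁻¹ • ((fun x => ∑' n, seriesTerm μ g f F n x) + F)

lemma lipschitzWith_seriesTerm (hf : ∀ x, Measurable (f x)) (hg : Integrable g μ)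
    (hint : ∀ x, Integrable (fun ω => ‖g ω‖ * dist (f x ω) x) μ) {lam : ℝ≥0}
    (hcontr : ∀ x z, ∫ ω, ‖g ω‖ * dist (f x ω) (f z ω) ∂μ ≤ lam * dist x z)
    {F : X → Y} {L : ℝ≥0} (hF : LipschitzWith L F) (n : ℕ) :
    LipschitzWith (L * lam ^ n * (lam + ‖∫ ω, g ω ∂μ‖₊)) (seriesTerm μ g f F n) := by
  have hn := lipschitzWith_iterate_integralCompOp hf hg hint hcontr hF n
  have h := (lipschitzWith_integralCompOp hf hg hint hcontr hn).sub
    ((lipschitzWith_smul (∫ ω, g ω ∂μ)).comp hn)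
  rw [seriesTerm, Function.iterate_succ_apply', mul_add, mul_comm (L * lam ^ n) ‖_‖₊]
  exact h

lemma integralCompOp_seriesTerm (hf : ∀ x, Measurable (f x)) (hg : Integrable g μ)
    (hint : ∀ x, Integrable (fun ω => ‖g ω‖ * dist (f x ω) x) μ) {lam : ℝ≥0}
    (hcontr : ∀ x z, ∫ ω, ‖g ω‖ * dist (f x ω) (f z ω) ∂μ ≤ lam * dist x z)
    {F : X → Y} {L : ℝ≥0} (hF : LipschitzWith L F) (n : ℕ) (x : X) :
    integralCompOp μ g f (seriesTerm μ g f F n) x = seriesTerm μ g f F (n + 1) x := by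
  have hn := lipschitzWith_iterate_integralCompOp hf hg hint hcontr hF
  rw [seriesTerm, integralCompOp_sub (integrable_smul_comp hf hg hint (hn (n + 1)) x)
    (integrable_smul_comp (u := (∫ ω, g ω ∂μ) • _) hf hg hint
      ((lipschitzWith_smul _).comp (hn n)) x), integralCompOp_smul]
  simp only [seriesTerm, Function.iterate_succ_apply', Pi.sub_apply]

variable [CompleteSpace Y]

lemma norm_seriesTerm_le (hf : ∀ x, Measurable (f x)) (hg : Integrable g μ)
    (hint : ∀ x, Integrable (fun ω => ‖g ω‖ * dist (f x ω) x) μ) {lam : ℝ≥0}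
    (hcontr : ∀ x z, ∫ ω, ‖g ω‖ * dist (f x ω) (f z ω) ∂μ ≤ lam * dist x z)
    {F : X → Y} {L : ℝ≥0} (hF : LipschitzWith L F) (n : ℕ) (x : X) :
    ‖seriesTerm μ g f F n x‖ ≤ L * lam ^ n * ∫ ω, ‖g ω‖ * dist (f x ω) x ∂μ := by
  rw [seriesTerm, Function.iterate_succ_apply']
  exact_mod_cast norm_integralCompOp_sub_smul_le hf hg hint
    (lipschitzWith_iterate_integralCompOp hf hg hint hcontr hF n) x

lemma summable_seriesTerm (hf : ∀ x, Measurable (f x)) (hg : Integrable g μ)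
    (hint : ∀ x, Integrable (fun ω => ‖g ω‖ * dist (f x ω) x) μ) {lam : ℝ≥0} (hlam : lam < 1)
    (hcontr : ∀ x z, ∫ ω, ‖g ω‖ * dist (f x ω) (f z ω) ∂μ ≤ lam * dist x z)
    {F : X → Y} {L : ℝ≥0} (hF : LipschitzWith L F) (x : X) :
    Summable fun n => seriesTerm μ g f F n x :=
  .of_norm_bounded
    (((summable_geometric_of_lt_one lam.coe_nonneg hlam).mul_left (L : ℝ)).mul_right _)
    (norm_seriesTerm_le hf hg hint hcontr hF · x)

lemma lipschitzWith_tsum_seriesTerm (hf : ∀ x, Measurable (f x)) (hg : Integrable g μ)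
    (hint : ∀ x, Integrable (fun ω => ‖g ω‖ * dist (f x ω) x) μ) {lam : ℝ≥0} (hlam : lam < 1)
    (hcontr : ∀ x z, ∫ ω, ‖g ω‖ * dist (f x ω) (f z ω) ∂μ ≤ lam * dist x z)
    {F : X → Y} {L : ℝ≥0} (hF : LipschitzWith L F) :
    LipschitzWith (∑' n, L * lam ^ n * (lam + ‖∫ ω, g ω ∂μ‖₊))
      fun x => ∑' n, seriesTerm μ g f F n x :=
  .tsum (lipschitzWith_seriesTerm hf hg hint hcontr hF)
    (((NNReal.summable_geometric hlam).mul_left L).mul_right _)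
    (summable_seriesTerm hf hg hint hlam hcontr hF)

lemma integralCompOp_tsum_seriesTerm (hf : ∀ x, Measurable (f x)) (hg : Integrable g μ)
    (hint : ∀ x, Integrable (fun ω => ‖g ω‖ * dist (f x ω) x) μ) {lam : ℝ≥0} (hlam : lam < 1)
    (hcontr : ∀ x z, ∫ ω, ‖g ω‖ * dist (f x ω) (f z ω) ∂μ ≤ lam * dist x z)
    {F : X → Y} {L : ℝ≥0} (hF : LipschitzWith L F) (x : X) :
    integralCompOp μ g f (fun y => ∑' n, seriesTerm μ g f F n y) x =
      (∑' n, seriesTerm μ g f F n x) - seriesTerm μ g f F 0 x := by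
  set a := ∫ ω, ‖g ω‖ * dist (f x ω) x ∂μ
  have hlip := lipschitzWith_seriesTerm hf hg hint hcontr hF
  have hbound : ∀ n, ∫ ω, ‖g ω • seriesTerm μ g f F n (f x ω)‖ ∂μ ≤
      L * lam ^ n * (a * ∫ ω, ‖g ω‖ ∂μ + (lam + ‖∫ ω, g ω ∂μ‖) * a) := by
    intro n
    refine (integral_norm_smul_comp_le hg hint (hlip n) x).trans ?_
    have hG : 0 ≤ ∫ ω, ‖g ω‖ ∂μ := integral_nonneg fun _ => norm_nonneg _
    have := mul_le_mul_of_nonneg_right (norm_seriesTerm_le hf hg hint hcontr hF n x) hG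
    push_cast
    linarith
  have hsum : Summable fun n => ∫ ω, ‖g ω • seriesTerm μ g f F n (f x ω)‖ ∂μ :=
    .of_nonneg_of_le (fun _ => integral_nonneg fun _ => norm_nonneg _) hbound
      (((summable_geometric_of_lt_one lam.coe_nonneg hlam).mul_left (L : ℝ)).mul_right _)
  have hshift : HasSum (fun n => seriesTerm μ g f F (n + 1) x)
      (integralCompOp μ g f (fun y => ∑' n, seriesTerm μ g f F n y) x) := by
    convert hasSum_integral_of_summable_integral_norm
      (fun n => integrable_smul_comp hf hg hint (hlip n) x) hsum using 1
    · exact funext fun n => (integralCompOp_seriesTerm hf hg hint hcontr hF n x).symm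
    · refine integral_congr_ae (.of_forall fun ω => ?_)
      exact ((summable_seriesTerm hf hg hint hlam hcontr hF (f x ω)).tsum_const_smul _).symm
  have h := (hasSum_nat_add_iff' 1).2 (summable_seriesTerm hf hg hint hlam hcontr hF x).hasSum
  rw [Finset.sum_range_one] at h
  exact hshift.unique h

lemma exists_lipschitzWith_seriesSolution (hf : ∀ x, Measurable (f x)) (hg : Integrable g μ)
    (hint : ∀ x, Integrable (fun ω => ‖g ω‖ * dist (f x ω) x) μ) {lam : ℝ≥0} (hlam : lam < 1)
    (hcontr : ∀ x z, ∫ ω, ‖g ω‖ * dist (f x ω) (f z ω) ∂μ ≤ lam * dist x z)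
    {F : X → Y} {L : ℝ≥0} (hF : LipschitzWith L F) :
    ∃ K, LipschitzWith K (seriesSolution μ g f F) :=
  ⟨_, (lipschitzWith_smul _).comp
    ((lipschitzWith_tsum_seriesTerm hf hg hint hlam hcontr hF).add hF)⟩

lemma integralCompOp_seriesSolution_add (hf : ∀ x, Measurable (f x)) (hg : Integrable g μ)
    (hint : ∀ x, Integrable (fun ω => ‖g ω‖ * dist (f x ω) x) μ) {lam : ℝ≥0} (hlam : lam < 1)
    (hcontr : ∀ x z, ∫ ω, ‖g ω‖ * dist (f x ω) (f z ω) ∂μ ≤ lam * dist x z)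
    {F : X → Y} {L : ℝ≥0} (hF : LipschitzWith L F) (hγ : ∫ ω, g ω ∂μ ≠ 1) (x : X) :
    integralCompOp μ g f (seriesSolution μ g f F) x + F x = seriesSolution μ g f F x := by
  have hS := lipschitzWith_tsum_seriesTerm hf hg hint hlam hcontr hF
  rw [seriesSolution, integralCompOp_smul, Pi.smul_apply,
    integralCompOp_add (integrable_smul_comp hf hg hint hS x)
      (integrable_smul_comp hf hg hint hF x),
    integralCompOp_tsum_seriesTerm hf hg hint hlam hcontr hF, eq_comm, ← sub_eq_iff_eq_add',
    Pi.smul_apply, ← smul_sub]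
  have h : (∑' n, seriesTerm μ g f F n x + F x) - ((∑' n, seriesTerm μ g f F n x) -
      seriesTerm μ g f F 0 x + integralCompOp μ g f F x) = (1 - ∫ ω, g ω ∂μ) • F x := by
    have hd0 : seriesTerm μ g f F 0 x = integralCompOp μ g f F x - (∫ ω, g ω ∂μ) • F x := rfl
    rw [hd0, sub_smul, one_smul]
    abel
  rw [Pi.add_apply, h, inv_smul_smul₀ (sub_ne_zero.2 hγ.symm)]

lemma eq_zero_of_integralCompOp_eq (hf : ∀ x, Measurable (f x)) (hg : Integrable g μ)
    (hint : ∀ x, Integrable (fun ω => ‖g ω‖ * dist (f x ω) x) μ) {lam : ℝ≥0} (hlam : lam < 1)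
    (hcontr : ∀ x z, ∫ ω, ‖g ω‖ * dist (f x ω) (f z ω) ∂μ ≤ lam * dist x z)
    (hγ : ∫ ω, g ω ∂μ ≠ 1) {h : X → Y} {K : ℝ≥0} (hh : LipschitzWith K h)
    (hfix : integralCompOp μ g f h = h) : h = 0 := by
  have hlip : ∀ n, LipschitzWith (K * lam ^ n) h := fun n => by
    simpa only [Function.iterate_fixed hfix] using
      lipschitzWith_iterate_integralCompOp hf hg hint hcontr hh n
  funext x
  have hconst : h = fun _ => h x :=
    funext fun y => apply_eq_of_forall_lipschitzWith_mul_pow hlam hlip y x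
  have hx : h x = (∫ ω, g ω ∂μ) • h x := by
    conv_lhs => rw [← hfix, hconst]
    exact integralCompOp_const _ _
  have : (1 - ∫ ω, g ω ∂μ) • h x = 0 := by rw [sub_smul, one_smul, ← hx, sub_self]
  exact (smul_eq_zero.1 this).resolve_left (sub_ne_zero.2 hγ.symm)

end FunctionalEquation

theorem stmt_7_general {Ω : Type*} [MeasurableSpace Ω] (μ : MeasureTheory.Measure Ω)
    {X : Type*} [MetricSpace X] [TopologicalSpace.SeparableSpace X]
    [MeasurableSpace X] [BorelSpace X]
    {𝕂 : Type*} [RCLike 𝕂]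
    {Y : Type*} [NormedAddCommGroup Y] [NormedSpace 𝕂 Y] [NormedSpace ℝ Y] [CompleteSpace Y]
    (f : X → Ω → X) (g : Ω → 𝕂) (F : X → Y) (L : NNReal)
    (hf : ∀ x, Measurable (f x))
    (hg : Integrable g μ)
    (hint : ∀ x, Integrable (fun ω => ‖g ω‖ * dist (f x ω) x) μ)
    (lam : ℝ) (hlam : lam ∈ Set.Ico (0 : ℝ) 1)
    (hcontr : ∀ x z : X, (∫ ω, ‖g ω‖ * dist (f x ω) (f z ω) ∂μ) ≤ lam * dist x z)
    (hF : LipschitzWith L F)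
    (γ : 𝕂) (hγ : γ = ∫ ω, g ω ∂μ) (hγ1 : γ ≠ 1)
    (Fseq : ℕ → X → Y)
    (hF0 : Fseq 0 = F)
    (hFn : ∀ n x, Fseq (n + 1) x = ∫ ω, g ω • Fseq n (f x ω) ∂μ)
    (φ : X → Y)
    (hφdef : ∀ x, φ x = (1 - γ)⁻¹ •
      ((∑' n : ℕ, (Fseq (n + 1) x - γ • Fseq n x)) + F x)) :
    (∃ K : NNReal, LipschitzWith K φ) ∧
    (∀ x, Integrable (fun ω => g ω • φ (f x ω)) μ ∧
      φ x = (∫ ω, g ω • φ (f x ω) ∂μ) + F x) ∧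
    (∀ ψ : X → Y, (∃ K : NNReal, LipschitzWith K ψ) →
      (∀ x, Integrable (fun ω => g ω • ψ (f x ω)) μ ∧
        ψ x = (∫ ω, g ω • ψ (f x ω) ∂μ) + F x) →
      ψ = φ) := by
  have := UniformSpace.secondCountable_of_separable X
  obtain ⟨hlam0, hlam1⟩ := hlam
  lift lam to ℝ≥0 using hlam0
  replace hlam1 : lam < 1 := by exact_mod_cast hlam1
  subst hγ
  have hiter : ∀ n, Fseq n = (integralCompOp μ g f)^[n] F := by
    intro n
    induction n with
    | zero => exact hF0
    | succ n ih => funext x; rw [hFn, ih, Function.iterate_succ_apply']; rfl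
  obtain rfl : φ = seriesSolution μ g f F := by
    funext x; rw [hφdef]; simp only [hiter]; rfl
  obtain ⟨K, hK⟩ := exists_lipschitzWith_seriesSolution hf hg hint hlam1 hcontr hF
  have hφint := integrable_smul_comp hf hg hint hK
  refine ⟨⟨K, hK⟩, fun x => ⟨hφint x,
    (integralCompOp_seriesSolution_add hf hg hint hlam1 hcontr hF hγ1 x).symm⟩, ?_⟩
  rintro ψ ⟨Kψ, hψ⟩ hψeq
  refine sub_eq_zero.1 (eq_zero_of_integralCompOp_eq hf hg hint hlam1 hcontr hγ1 (hψ.sub hK) ?_)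
  funext x
  rw [integralCompOp_sub (hψeq x).1 (hφint x), Pi.sub_apply, (hψeq x).2,
    ← integralCompOp_seriesSolution_add hf hg hint hlam1 hcontr hF hγ1 x, add_sub_add_right_eq_sub]
  rfl

/-- Main theorem: if γ = ∫ g dμ ≠ 1, the equation φ(x) = ∫ g(ω) • φ(f(x,ω)) dμ + F(x)
has exactly one Lipschitzian solution, given by
φ(x) = (1−γ)⁻¹ • (∑ₙ (F_{n+1}(x) − γ Fₙ(x)) + F(x)). -/
theorem stmt_7 {Ω : Type*} [MeasurableSpace Ω] (μ : MeasureTheory.Measure Ω)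
    {X : Type*} [MetricSpace X] [TopologicalSpace.SeparableSpace X]
    [MeasurableSpace X] [BorelSpace X]
    {𝕂 : Type*} [RCLike 𝕂]
    {Y : Type*} [NormedAddCommGroup Y] [NormedSpace 𝕂 Y] [NormedSpace ℝ Y] [CompleteSpace Y]
    (f : X → Ω → X) (g : Ω → 𝕂) (F : X → Y) (L : NNReal)
    (hf : ∀ x, Measurable (f x))
    (hg : Integrable g μ)
    (hint : ∀ x, Integrable (fun ω => ‖g ω‖ * dist (f x ω) x) μ)
    (lam : ℝ) (hlam : lam ∈ Set.Ico (0 : ℝ) 1)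
    (hcontr : ∀ x z : X, (∫ ω, ‖g ω‖ * dist (f x ω) (f z ω) ∂μ) ≤ lam * dist x z)
    (hF : LipschitzWith L F)
    (γ : 𝕂) (hγ : γ = ∫ ω, g ω ∂μ) (hγ1 : γ ≠ 1)
    (Fseq : ℕ → X → Y)
    (hF0 : Fseq 0 = F)
    (hFn : ∀ n x, Fseq (n + 1) x = ∫ ω, g ω • Fseq n (f x ω) ∂μ)
    (hmeas : ∀ n x, AEStronglyMeasurable (fun ω => g ω • Fseq n (f x ω)) μ)
    (φ : X → Y)
    (hφdef : ∀ x, φ x = (1 - γ)⁻¹ •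
      ((∑' n : ℕ, (Fseq (n + 1) x - γ • Fseq n x)) + F x)) :
    (∃ K : NNReal, LipschitzWith K φ) ∧
    (∀ x, Integrable (fun ω => g ω • φ (f x ω)) μ ∧
      φ x = (∫ ω, g ω • φ (f x ω) ∂μ) + F x) ∧
    (∀ ψ : X → Y, (∃ K : NNReal, LipschitzWith K ψ) →
      (∀ x, Integrable (fun ω => g ω • ψ (f x ω)) μ ∧
        ψ x = (∫ ω, g ω • ψ (f x ω) ∂μ) + F x) →
      ψ = φ) :=
  stmt_7_general μ f g F L hf hg hint lam hlam hcontr hF γ hγ hγ1 Fseq hF0 hFn φ hφdef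
end

section
/- The unique Lipschitzian solution φ of φ(x) = ∫_Ω g(ω) φ(f(x,ω)) μ(dω) + F(x) satisfies ‖φ(x) − φ(z)‖ ≤ L(1 + |γ|) / (|1 − γ|(1 − λ)) · ρ(x,z) for all x, z ∈ X. -/
open MeasureTheory

/-- Lipschitz bound (7) for the unique Lipschitzian solution. -/
theorem stmt_8 {Ω : Type*} [MeasurableSpace Ω] (μ : MeasureTheory.Measure Ω)
    {X : Type*} [MetricSpace X] [TopologicalSpace.SeparableSpace X]
    [MeasurableSpace X] [BorelSpace X]
    {𝕂 : Type*} [RCLike 𝕂]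
    {Y : Type*} [NormedAddCommGroup Y] [NormedSpace 𝕂 Y] [NormedSpace ℝ Y] [CompleteSpace Y]
    (f : X → Ω → X) (g : Ω → 𝕂) (F : X → Y) (L : NNReal)
    (hf : ∀ x, Measurable (f x))
    (hg : Integrable g μ)
    (hint : ∀ x, Integrable (fun ω => ‖g ω‖ * dist (f x ω) x) μ)
    (lam : ℝ) (hlam : lam ∈ Set.Ico (0 : ℝ) 1)
    (hcontr : ∀ x z : X, (∫ ω, ‖g ω‖ * dist (f x ω) (f z ω) ∂μ) ≤ lam * dist x z)
    (hF : LipschitzWith L F)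
    (γ : 𝕂) (hγ : γ = ∫ ω, g ω ∂μ) (hγ1 : γ ≠ 1)
    (φ : X → Y)
    (hφ : ∃ K : NNReal, LipschitzWith K φ)
    (hsol : ∀ x, Integrable (fun ω => g ω • φ (f x ω)) μ ∧
      φ x = (∫ ω, g ω • φ (f x ω) ∂μ) + F x) :
    ∀ x z : X, ‖φ x - φ z‖ ≤ (L : ℝ) * (1 + ‖γ‖) / (‖1 - γ‖ * (1 - lam)) * dist x z := by
  obtain ⟨hlam0, hlam1⟩ := hlam
  haveI : SecondCountableTopology X := UniformSpace.secondCountable_of_separable X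
  obtain ⟨K₀, hK₀⟩ := hφ
  set S : Set ℝ := {K | 0 ≤ K ∧ ∀ x z : X, ‖φ x - φ z‖ ≤ K * dist x z} with hSdef
  have hK₀S : (K₀ : ℝ) ∈ S := by
    refine ⟨K₀.2, fun x z => ?_⟩
    simpa [dist_eq_norm] using hK₀.dist_le_mul x z
  have hSne : S.Nonempty := ⟨K₀, hK₀S⟩
  have hSbdd : BddBelow S := ⟨0, fun K hK => hK.1⟩
  -- the contraction step: if K works, so does lam*K + L
  have step : ∀ K ∈ S, lam * K + (L : ℝ) ∈ S := by
    rintro K ⟨hK0, hK⟩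
    refine ⟨by positivity, fun a b => ?_⟩
    have hdmeas : AEStronglyMeasurable (fun ω => ‖g ω‖ * dist (f a ω) (f b ω)) μ :=
      hg.norm.aestronglyMeasurable.mul ((hf a).dist (hf b)).aestronglyMeasurable
    have hmaj : Integrable (fun ω => ‖g ω‖ * dist (f a ω) (f b ω)) μ := by
      refine Integrable.mono'
        (((hint a).add (hg.norm.mul_const (dist a b))).add (hint b)) hdmeas ?_
      filter_upwards with ω
      have htri : dist (f a ω) (f b ω) ≤ dist (f a ω) a + dist a b + dist (f b ω) b := by
        calc dist (f a ω) (f b ω) ≤ dist (f a ω) a + dist a (f b ω) := dist_triangle _ _ _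
          _ ≤ dist (f a ω) a + (dist a b + dist b (f b ω)) := by
              gcongr; exact dist_triangle _ _ _
          _ = dist (f a ω) a + dist a b + dist (f b ω) b := by
              rw [dist_comm b (f b ω)]; ring
      have h0 : (0:ℝ) ≤ ‖g ω‖ * dist (f a ω) (f b ω) := by positivity
      rw [Real.norm_of_nonneg h0]
      have := mul_le_mul_of_nonneg_left htri (norm_nonneg (g ω))
      simpa [mul_add] using this
    have hsub : φ a - φ b
        = (∫ ω, (g ω • φ (f a ω) - g ω • φ (f b ω)) ∂μ) + (F a - F b) := by
      rw [integral_sub (hsol a).1 (hsol b).1]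
      rw [(hsol a).2, (hsol b).2]
      abel
    have h1 : ‖∫ ω, (g ω • φ (f a ω) - g ω • φ (f b ω)) ∂μ‖
        ≤ ∫ ω, K * (‖g ω‖ * dist (f a ω) (f b ω)) ∂μ := by
      refine norm_integral_le_of_norm_le (hmaj.const_mul K) ?_
      filter_upwards with ω
      rw [← smul_sub, norm_smul]
      calc ‖g ω‖ * ‖φ (f a ω) - φ (f b ω)‖
          ≤ ‖g ω‖ * (K * dist (f a ω) (f b ω)) :=
            mul_le_mul_of_nonneg_left (hK _ _) (norm_nonneg _)
        _ = K * (‖g ω‖ * dist (f a ω) (f b ω)) := by ring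
    have h1' : (∫ ω, K * (‖g ω‖ * dist (f a ω) (f b ω)) ∂μ) ≤ K * (lam * dist a b) := by
      rw [MeasureTheory.integral_const_mul]
      exact mul_le_mul_of_nonneg_left (hcontr a b) hK0
    have h2 : ‖F a - F b‖ ≤ (L : ℝ) * dist a b := by
      simpa [dist_eq_norm] using hF.dist_le_mul a b
    calc ‖φ a - φ b‖
        = ‖(∫ ω, (g ω • φ (f a ω) - g ω • φ (f b ω)) ∂μ) + (F a - F b)‖ := by rw [hsub]
      _ ≤ ‖∫ ω, (g ω • φ (f a ω) - g ω • φ (f b ω)) ∂μ‖ + ‖F a - F b‖ := norm_add_le _ _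
      _ ≤ K * (lam * dist a b) + (L : ℝ) * dist a b := add_le_add (h1.trans h1') h2
      _ = (lam * K + (L : ℝ)) * dist a b := by ring
  set c : ℝ := sInf S with hc
  have hc0 : 0 ≤ c := le_csInf hSne fun K hK => hK.1
  -- c ≤ lam * c + L
  have hcle : c ≤ lam * c + (L : ℝ) := by
    rcases eq_or_lt_of_le hlam0 with h0 | h0
    · obtain ⟨K, hK⟩ := hSne
      have := csInf_le hSbdd (step K hK)
      rw [← h0] at this ⊢
      simpa using this
    · have hlb : (c - (L : ℝ)) / lam ≤ c := by
        refine le_csInf hSne fun K hK => ?_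
        have h1 : c ≤ lam * K + (L : ℝ) := csInf_le hSbdd (step K hK)
        rw [div_le_iff₀ h0] at *
        nlinarith
      rw [div_le_iff₀ h0] at hlb
      nlinarith
  have hcL : c ≤ (L : ℝ) / (1 - lam) := by
    rw [le_div_iff₀ (by linarith)]
    nlinarith
  -- the bound holds with constant c
  have hbound : ∀ x z : X, ‖φ x - φ z‖ ≤ c * dist x z := by
    intro x z
    rcases eq_or_lt_of_le (dist_nonneg (x := x) (y := z)) with hd | hd
    · have : x = z := by
        have := dist_eq_zero.mp hd.symm
        exact this
      simp [this]
    · have : ‖φ x - φ z‖ / dist x z ≤ c := by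
        refine le_csInf hSne fun K hK => ?_
        rw [div_le_iff₀ hd]
        exact hK.2 x z
      calc ‖φ x - φ z‖ = ‖φ x - φ z‖ / dist x z * dist x z := by field_simp
        _ ≤ c * dist x z := mul_le_mul_of_nonneg_right this (le_of_lt hd)
  intro x z
  have hγpos : 0 < ‖1 - γ‖ := by
    rw [norm_pos_iff, sub_ne_zero]
    exact fun h => hγ1 h.symm
  have hγle : ‖1 - γ‖ ≤ 1 + ‖γ‖ := by
    calc ‖1 - γ‖ ≤ ‖(1 : 𝕂)‖ + ‖γ‖ := norm_sub_le _ _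
      _ = 1 + ‖γ‖ := by rw [norm_one]
  have hconst : (L : ℝ) / (1 - lam) ≤ (L : ℝ) * (1 + ‖γ‖) / (‖1 - γ‖ * (1 - lam)) := by
    rw [div_le_div_iff₀ (by linarith) (mul_pos hγpos (by linarith))]
    have hL : (0:ℝ) ≤ (L:ℝ) := L.2
    nlinarith [mul_nonneg hL (by linarith : (0:ℝ) ≤ 1 - lam), hγle]
  calc ‖φ x - φ z‖ ≤ c * dist x z := hbound x z
    _ ≤ (L : ℝ) / (1 - lam) * dist x z :=
        mul_le_mul_of_nonneg_right hcL dist_nonneg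
    _ ≤ (L : ℝ) * (1 + ‖γ‖) / (‖1 - γ‖ * (1 - lam)) * dist x z :=
        mul_le_mul_of_nonneg_right hconst dist_nonneg
end

section
/- Let λ ∈ (0,1). The function f(x) = λ√x + 1 − λ maps [1,∞) into [1,∞), satisfies |f(x) − f(z)| ≤ (λ/2)|x − z| for x, z ≥ 1, and the restriction of the natural logarithm to [1,∞) satisfies log x = 2 log(λ√x + 1 − λ) + log( x / (λ√x + 1 − λ)² ) for every x ≥ 1; moreover log is the unique Lipschitzian solution φ : [1,∞) → ℝ of φ(x) = 2 φ(λ√x + 1 − λ) + log( x / (λ√x + 1 − λ)² ). -/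
/-!
Put `ψ = φ - log`. Since `log` solves the equation, `ψ x = 2 ψ (f x)`, and `ψ 1 = 0` because `1` is
a fixed point of `f`. The map `f` pulls every point toward `1` by the factor `λ/2`, so
`|ψ x| = 2ⁿ |ψ (fⁿ x) - ψ 1| ≤ 2ⁿ K (λ/2)ⁿ |x - 1| = K λⁿ |x - 1|`, which tends to `0`.
-/

open Set Filter Topology

section Uniqueness

variable {α : Type*} {S : Set α} {f : α → α}

lemma eq_const_mul_iterate {γ : ℝ} {ψ : α → ℝ} (hf : MapsTo f S S)
    (hψ : ∀ y ∈ S, ψ y = γ * ψ (f y)) {y : α} (hy : y ∈ S) (n : ℕ) :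
    ψ y = γ ^ n * ψ (f^[n] y) := by
  induction n with
  | zero => simp
  | succ n ih =>
    rw [ih, hψ _ (hf.iterate n hy), ← Function.iterate_succ_apply' f n y]
    ring

variable [PseudoMetricSpace α] {p : α}

lemma dist_iterate_le_pow_mul {L : ℝ} (hf : MapsTo f S S) (hfp : f p = p) (hL0 : 0 ≤ L)
    (hL : ∀ y ∈ S, dist (f y) (f p) ≤ L * dist y p) {y : α} (hy : y ∈ S) (n : ℕ) :
    dist (f^[n] y) p ≤ L ^ n * dist y p := by
  induction n with
  | zero => simp
  | succ n ih =>
    calc dist (f^[n + 1] y) p = dist (f (f^[n] y)) p := by rw [Function.iterate_succ_apply']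
      _ ≤ L * dist (f^[n] y) p := by simpa only [hfp] using hL _ (hf.iterate n hy)
      _ ≤ L * (L ^ n * dist y p) := by gcongr
      _ = L ^ (n + 1) * dist y p := by ring

theorem eq_zero_of_eq_const_mul_comp {γ L K : ℝ} {ψ : α → ℝ} (hf : MapsTo f S S) (hp : p ∈ S)
    (hfp : f p = p) (hL0 : 0 ≤ L) (hL : ∀ y ∈ S, dist (f y) (f p) ≤ L * dist y p)
    (hγ : γ ≠ 1) (hγL : |γ| * L < 1) (hK0 : 0 ≤ K) (hK : ∀ y ∈ S, |ψ y - ψ p| ≤ K * dist y p)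
    (hψ : ∀ y ∈ S, ψ y = γ * ψ (f y)) {y : α} (hy : y ∈ S) : ψ y = 0 := by
  have hψp : ψ p = 0 := by
    have h := hψ p hp
    rw [hfp] at h
    exact (mul_eq_zero.mp (by linarith : (γ - 1) * ψ p = 0)).resolve_left (sub_ne_zero.mpr hγ)
  have hbound : ∀ n : ℕ, |ψ y| ≤ K * dist y p * (|γ| * L) ^ n := by
    intro n
    have hdist := dist_iterate_le_pow_mul hf hfp hL0 hL hy n
    have hlip := hK _ (hf.iterate n hy)
    rw [hψp, sub_zero] at hlip
    calc |ψ y| = |γ| ^ n * |ψ (f^[n] y)| := by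
          rw [eq_const_mul_iterate hf hψ hy n, abs_mul, abs_pow]
      _ ≤ |γ| ^ n * (K * dist (f^[n] y) p) := by gcongr
      _ ≤ |γ| ^ n * (K * (L ^ n * dist y p)) := by gcongr
      _ = K * dist y p * (|γ| * L) ^ n := by ring
  have hlim : Tendsto (fun n : ℕ => K * dist y p * (|γ| * L) ^ n) atTop (𝓝 0) := by
    simpa using (tendsto_pow_atTop_nhds_zero_of_lt_one (by positivity) hγL).const_mul
      (K * dist y p)
  exact abs_nonpos_iff.mp (ge_of_tendsto' hlim hbound)

end Uniqueness

lemma abs_sqrt_sub_sqrt_le_half {x z : ℝ} (hx : 1 ≤ x) (hz : 1 ≤ z) :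
    |√x - √z| ≤ |x - z| / 2 := by
  have hsx : 1 ≤ √x := Real.one_le_sqrt.mpr hx
  have hsz : 1 ≤ √z := Real.one_le_sqrt.mpr hz
  have hdiff : x - z = (√x - √z) * (√x + √z) := by
    linear_combination -Real.sq_sqrt (by linarith : 0 ≤ x) + Real.sq_sqrt (by linarith : 0 ≤ z)
  rw [hdiff, abs_mul, abs_of_pos (by linarith : 0 < √x + √z)]
  nlinarith [abs_nonneg (√x - √z)]

section SqrtAffine

variable {lam : ℝ}

lemma one_le_mul_sqrt_add_one_sub (hlam : 0 ≤ lam) {x : ℝ} (hx : 1 ≤ x) :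
    1 ≤ lam * √x + 1 - lam := by
  nlinarith [Real.one_le_sqrt.mpr hx]

lemma abs_mul_sqrt_add_one_sub_sub_le (hlam : 0 ≤ lam) {x z : ℝ} (hx : 1 ≤ x) (hz : 1 ≤ z) :
    |(lam * √x + 1 - lam) - (lam * √z + 1 - lam)| ≤ lam / 2 * |x - z| := by
  calc |(lam * √x + 1 - lam) - (lam * √z + 1 - lam)| = |lam * (√x - √z)| := by ring_nf
    _ = lam * |√x - √z| := by rw [abs_mul, abs_of_nonneg hlam]
    _ ≤ lam * (|x - z| / 2) := by gcongr; exact abs_sqrt_sub_sqrt_le_half hx hz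
    _ = lam / 2 * |x - z| := by ring

lemma log_eq_two_mul_log_add_log_div (hlam : 0 ≤ lam) {x : ℝ} (hx : 1 ≤ x) :
    Real.log x = 2 * Real.log (lam * √x + 1 - lam) +
      Real.log (x / (lam * √x + 1 - lam) ^ 2) := by
  have hf := one_le_mul_sqrt_add_one_sub hlam hx
  rw [Real.log_div (by linarith) (by positivity), Real.log_pow]
  push_cast
  ring

end SqrtAffine

lemma abs_log_sub_log_one_le {x : ℝ} (hx : 1 ≤ x) : |Real.log x - Real.log 1| ≤ |x - 1| := by
  rw [Real.log_one, sub_zero, abs_of_nonneg (Real.log_nonneg hx), abs_of_nonneg (by linarith)]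
  linarith [Real.log_le_sub_one_of_pos (by linarith : 0 < x)]

lemma abs_sub_log_sub_sub_log_one_le {φ : ℝ → ℝ} {K y : ℝ} (hy : 1 ≤ y)
    (hK : |φ y - φ 1| ≤ K * |y - 1|) :
    |φ y - Real.log y - (φ 1 - Real.log 1)| ≤ (|K| + 1) * |y - 1| :=
  calc |φ y - Real.log y - (φ 1 - Real.log 1)|
      = |(φ y - φ 1) - (Real.log y - Real.log 1)| := by ring_nf
    _ ≤ |φ y - φ 1| + |Real.log y - Real.log 1| := abs_sub _ _
    _ ≤ |K| * |y - 1| + |y - 1| :=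
        add_le_add (hK.trans (by gcongr; exact le_abs_self K)) (abs_log_sub_log_one_le hy)
    _ = (|K| + 1) * |y - 1| := by ring

/-- Example 3.2: with f(x) = λ√x + 1 − λ on [1,∞), log is the unique Lipschitzian
solution of φ(x) = 2φ(f(x)) + log(x / f(x)²). -/
theorem stmt_11 (lam : ℝ) (hlam : lam ∈ Set.Ioo (0 : ℝ) 1) :
    (∀ x : ℝ, 1 ≤ x → 1 ≤ lam * Real.sqrt x + 1 - lam) ∧
    (∀ x z : ℝ, 1 ≤ x → 1 ≤ z →
      |(lam * Real.sqrt x + 1 - lam) - (lam * Real.sqrt z + 1 - lam)| ≤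
        lam / 2 * |x - z|) ∧
    (∀ x : ℝ, 1 ≤ x →
      Real.log x = 2 * Real.log (lam * Real.sqrt x + 1 - lam) +
        Real.log (x / (lam * Real.sqrt x + 1 - lam) ^ 2)) ∧
    (∀ φ : ℝ → ℝ,
      (∃ K : ℝ, ∀ x z : ℝ, 1 ≤ x → 1 ≤ z → |φ x - φ z| ≤ K * |x - z|) →
      (∀ x : ℝ, 1 ≤ x →
        φ x = 2 * φ (lam * Real.sqrt x + 1 - lam) +
          Real.log (x / (lam * Real.sqrt x + 1 - lam) ^ 2)) →
      ∀ x : ℝ, 1 ≤ x → φ x = Real.log x) := by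
  obtain ⟨hl0, hl1⟩ := hlam
  refine ⟨fun x hx => one_le_mul_sqrt_add_one_sub hl0.le hx,
    fun x z hx hz => abs_mul_sqrt_add_one_sub_sub_le hl0.le hx hz,
    fun x hx => log_eq_two_mul_log_add_log_div hl0.le hx, ?_⟩
  rintro φ ⟨K, hK⟩ hφ x hx
  suffices φ x - Real.log x = 0 by linarith
  refine eq_zero_of_eq_const_mul_comp (S := Ici 1) (p := 1) (γ := 2) (L := lam / 2) (K := |K| + 1)
    (f := fun y => lam * √y + 1 - lam) (ψ := fun y => φ y - Real.log y)
    (fun y hy => one_le_mul_sqrt_add_one_sub hl0.le hy) self_mem_Ici (by simp) (by positivity)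
    (fun y hy => by
      simpa only [Real.dist_eq] using abs_mul_sqrt_add_one_sub_sub_le hl0.le hy le_rfl)
    (by norm_num) (by rw [abs_two]; linarith) (by positivity) (fun y hy => ?_) (fun y hy => ?_) hx
  · exact abs_sub_log_sub_sub_log_one_le hy (hK y 1 hy le_rfl)
  · linarith [hφ y hy, log_eq_two_mul_log_add_log_div hl0.le (mem_Ici.mp hy)]
end

section
/- The solution operator F ↦ φ^F, assigning to each F ∈ Lip(X,Y) the unique Lipschitzian solution φ^F of φ(x) = ∫_Ω g(ω) φ(f(x,ω)) μ(dω) + F(x), is a linear bijection of Lip(X,Y) onto itself and satisfies ‖φ^F‖_Lip ≤ c/|1 − γ| · ‖F‖_Lip, where c = max{1, c₀} and c₀ = (1 − λ)^{−1}( ∫_Ω |g(ω)| ρ(f(x₀,ω), x₀) μ(dω) + 1 + |γ| ); in particular it is a homeomorphism of (Lip(X,Y), ‖·‖_Lip) onto itself. -/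
/-!
Write `A = transferOp μ f g`, i.e. `A φ x = ∫ g ω • φ (f x ω) dμ`, so that the equation reads
`φ - A φ = F`. The contraction hypothesis makes `A` shrink Lipschitz constants by the factor `λ`,
so a Lipschitz solution satisfies `L(φ) ≤ λ L(φ) + L(F)`. Since `A φ x₀` and `γ • φ x₀` differ by
at most `L(φ) ∫ |g| ρ(f(x₀,ω), x₀) dμ`, the equation at `x₀` controls `(1 - γ) φ(x₀)`. Together
these give the norm bound, and for `F = 0` they force `φ = 0`: this uniqueness gives linearity of
`F ↦ φ^F`. It is injective because `F = φ^F - A φ^F`, and surjective because `ψ - A ψ` is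
Lipschitz whenever `ψ` is.
-/

open MeasureTheory

/-- The smallest Lipschitz constant of a function. -/
noncomputable def lipConst {X : Type*} [MetricSpace X] {Y : Type*}
    [NormedAddCommGroup Y] (u : X → Y) : ℝ :=
  sInf {K : ℝ | 0 ≤ K ∧ ∀ x z, ‖u x - u z‖ ≤ K * dist x z}

section LipConst

variable {X Y : Type*} [MetricSpace X] [NormedAddCommGroup Y]

lemma lipConst_nonneg (u : X → Y) : 0 ≤ lipConst u :=
  Real.sInf_nonneg fun _ hK => hK.1

lemma lipConst_le {u : X → Y} {K : ℝ} (hK : 0 ≤ K) (h : ∀ x z, ‖u x - u z‖ ≤ K * dist x z) :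
    lipConst u ≤ K :=
  csInf_le ⟨0, fun _ hk => hk.1⟩ ⟨hK, h⟩

lemma lipConst_zero : lipConst (0 : X → Y) = 0 :=
  le_antisymm (lipConst_le le_rfl fun _ _ => by simp) (lipConst_nonneg _)

lemma LipschitzWith.norm_sub_le_lipConst_mul {u : X → Y} {K : NNReal} (h : LipschitzWith K u)
    (x z : X) : ‖u x - u z‖ ≤ lipConst u * dist x z := by
  rcases eq_or_ne x z with rfl | hxz
  · simp
  have hd : 0 < dist x z := dist_pos.2 hxz
  rw [← div_le_iff₀ hd]
  refine le_csInf ⟨K, K.coe_nonneg, fun a b => by simpa [dist_eq_norm] using h.dist_le_mul a b⟩ ?_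
  exact fun K hK => (div_le_iff₀ hd).2 (hK.2 x z)

end LipConst

section

variable {Ω X 𝕂 Y : Type*} [MeasurableSpace Ω] [RCLike 𝕂] [NormedAddCommGroup Y] [NormedSpace 𝕂 Y]

section TransferOp

variable [NormedSpace ℝ Y]

noncomputable def transferOp (μ : Measure Ω) (f : X → Ω → X) (g : Ω → 𝕂) (φ : X → Y) : X → Y :=
  fun x => ∫ ω, g ω • φ (f x ω) ∂μ

lemma transferOp_smul (μ : Measure Ω) (f : X → Ω → X) (g : Ω → 𝕂) (a : 𝕂) (φ : X → Y) :
    transferOp μ f g (a • φ) = a • transferOp μ f g φ := by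
  funext x
  simp only [transferOp, Pi.smul_apply, ← integral_smul, smul_comm a]

lemma smul_sub_transferOp (μ : Measure Ω) (f : X → Ω → X) (g : Ω → 𝕂) (a : 𝕂) (φ : X → Y) :
    a • φ - transferOp μ f g (a • φ) = a • (φ - transferOp μ f g φ) := by
  rw [transferOp_smul, smul_sub]

end TransferOp

variable [MetricSpace X]

lemma norm_integral_smul_sub_le [NormedSpace ℝ Y] {μ : Measure Ω} {g : Ω → 𝕂} {φ : X → Y} {L : ℝ}
    (hφ : ∀ a b, ‖φ a - φ b‖ ≤ L * dist a b) {u v : Ω → X}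
    (huv : Integrable (fun ω => ‖g ω‖ * dist (u ω) (v ω)) μ) :
    ‖∫ ω, g ω • (φ (u ω) - φ (v ω)) ∂μ‖ ≤ L * ∫ ω, ‖g ω‖ * dist (u ω) (v ω) ∂μ := by
  rw [← integral_const_mul]
  refine norm_integral_le_of_norm_le (huv.const_mul L) (ae_of_all _ fun ω => ?_)
  rw [norm_smul, mul_left_comm]
  exact mul_le_mul_of_nonneg_left (hφ _ _) (norm_nonneg _)

/-- Hypotheses (H₁), (H₂) on the data `μ, f, g` of the equation, with contraction factor `lam`. -/
structure LipContraction [MeasurableSpace X] (μ : Measure Ω) (f : X → Ω → X) (g : Ω → 𝕂)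
    (lam : ℝ) : Prop where
  measurable : ∀ x, Measurable (f x)
  integrable : Integrable g μ
  integrable_dist : ∀ x, Integrable (fun ω => ‖g ω‖ * dist (f x ω) x) μ
  lam_nonneg : 0 ≤ lam
  lam_lt_one : lam < 1
  contraction : ∀ x z, ∫ ω, ‖g ω‖ * dist (f x ω) (f z ω) ∂μ ≤ lam * dist x z

namespace LipContraction

variable [MeasurableSpace X] [BorelSpace X] [TopologicalSpace.SeparableSpace X]
  {μ : Measure Ω} {f : X → Ω → X} {g : Ω → 𝕂} {lam : ℝ}

lemma integrable_norm_mul_dist (H : LipContraction μ f g lam) (x z : X) :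
    Integrable (fun ω => ‖g ω‖ * dist (f x ω) (f z ω)) μ := by
  have := UniformSpace.secondCountable_of_separable X
  have hmeas : AEStronglyMeasurable (fun ω => ‖g ω‖ * dist (f x ω) (f z ω)) μ :=
    H.integrable.norm.aestronglyMeasurable.mul
      ((H.measurable x).dist (H.measurable z)).aestronglyMeasurable
  refine (((H.integrable_dist x).add (H.integrable.norm.mul_const (dist x z))).add
    (H.integrable_dist z)).mono' hmeas (ae_of_all _ fun ω => ?_)
  have htri := dist_triangle4 (f x ω) x z (f z ω)
  rw [dist_comm z] at htri
  simp only [Real.norm_eq_abs, abs_mul, abs_norm, abs_dist, Pi.add_apply]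
  nlinarith [norm_nonneg (g ω)]

lemma integrable_smul_comp (H : LipContraction μ f g lam) {ψ : X → Y} {K : NNReal}
    (hψ : LipschitzWith K ψ) (x : X) : Integrable (fun ω => g ω • ψ (f x ω)) μ := by
  have := UniformSpace.secondCountable_of_separable X
  have hmeas : AEStronglyMeasurable (fun ω => g ω • ψ (f x ω)) μ :=
    H.integrable.aestronglyMeasurable.smul
      (hψ.continuous.comp_stronglyMeasurable (H.measurable x).stronglyMeasurable).aestronglyMeasurable
  refine (((H.integrable_dist x).const_mul K).add (H.integrable.norm.mul_const ‖ψ x‖)).mono'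
    hmeas (ae_of_all _ fun ω => ?_)
  have hψx : ‖ψ (f x ω)‖ ≤ K * dist (f x ω) x + ‖ψ x‖ := by
    have hK := hψ.dist_le_mul (f x ω) x
    rw [dist_eq_norm] at hK
    linarith [norm_sub_norm_le (ψ (f x ω)) (ψ x)]
  rw [norm_smul]
  calc ‖g ω‖ * ‖ψ (f x ω)‖ ≤ ‖g ω‖ * (K * dist (f x ω) x + ‖ψ x‖) :=
        mul_le_mul_of_nonneg_left hψx (norm_nonneg _)
    _ = K * (‖g ω‖ * dist (f x ω) x) + ‖g ω‖ * ‖ψ x‖ := by ring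

variable [NormedSpace ℝ Y]

lemma transferOp_add (H : LipContraction μ f g lam) {φ ψ : X → Y} {K₁ K₂ : NNReal}
    (hφ : LipschitzWith K₁ φ) (hψ : LipschitzWith K₂ ψ) :
    transferOp μ f g (φ + ψ) = transferOp μ f g φ + transferOp μ f g ψ := by
  funext x
  simp only [transferOp, Pi.add_apply, smul_add]
  exact integral_add (H.integrable_smul_comp hφ x) (H.integrable_smul_comp hψ x)

lemma transferOp_sub (H : LipContraction μ f g lam) {φ ψ : X → Y} {K₁ K₂ : NNReal}
    (hφ : LipschitzWith K₁ φ) (hψ : LipschitzWith K₂ ψ) :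
    transferOp μ f g (φ - ψ) = transferOp μ f g φ - transferOp μ f g ψ := by
  funext x
  simp only [transferOp, Pi.sub_apply, smul_sub]
  exact integral_sub (H.integrable_smul_comp hφ x) (H.integrable_smul_comp hψ x)

lemma norm_transferOp_sub_le (H : LipContraction μ f g lam) {φ : X → Y} {K : NNReal} {L : ℝ}
    (hφ : LipschitzWith K φ) (hL : 0 ≤ L) (hφL : ∀ a b, ‖φ a - φ b‖ ≤ L * dist a b) (x z : X) :
    ‖transferOp μ f g φ x - transferOp μ f g φ z‖ ≤ lam * L * dist x z := by
  have hsub : transferOp μ f g φ x - transferOp μ f g φ z =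
      ∫ ω, g ω • (φ (f x ω) - φ (f z ω)) ∂μ := by
    simp only [transferOp, smul_sub]
    exact (integral_sub (H.integrable_smul_comp hφ x) (H.integrable_smul_comp hφ z)).symm
  calc _ ≤ L * ∫ ω, ‖g ω‖ * dist (f x ω) (f z ω) ∂μ :=
        hsub ▸ norm_integral_smul_sub_le hφL (H.integrable_norm_mul_dist x z)
    _ ≤ L * (lam * dist x z) := mul_le_mul_of_nonneg_left (H.contraction x z) hL
    _ = lam * L * dist x z := by ring

lemma lipschitzWith_sub_transferOp (H : LipContraction μ f g lam) {φ : X → Y} {K : NNReal}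
    (hφ : LipschitzWith K φ) :
    LipschitzWith (K + Real.toNNReal lam * K) (φ - transferOp μ f g φ) := by
  refine hφ.sub (LipschitzWith.of_dist_le_mul fun x z => ?_)
  rw [dist_eq_norm, NNReal.coe_mul, Real.coe_toNNReal _ H.lam_nonneg]
  exact H.norm_transferOp_sub_le hφ K.coe_nonneg
    (fun a b => by simpa [dist_eq_norm] using hφ.dist_le_mul a b) x z

lemma lipConst_le_lipConst_sub_transferOp (H : LipContraction μ f g lam) {φ : X → Y}
    {K : NNReal} (hφ : LipschitzWith K φ) :
    lipConst φ ≤ (1 - lam)⁻¹ * lipConst (φ - transferOp μ f g φ) := by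
  set F := φ - transferOp μ f g φ
  have hF := (H.lipschitzWith_sub_transferOp hφ).norm_sub_le_lipConst_mul
  have hrec : lipConst φ ≤ lam * lipConst φ + lipConst F := by
    refine lipConst_le (by nlinarith [lipConst_nonneg φ, lipConst_nonneg F, H.lam_nonneg])
      fun x z => ?_
    have hAφ := H.norm_transferOp_sub_le hφ (lipConst_nonneg φ) hφ.norm_sub_le_lipConst_mul x z
    calc ‖φ x - φ z‖ = ‖(transferOp μ f g φ x - transferOp μ f g φ z) + (F x - F z)‖ := by
          simp only [F, Pi.sub_apply]; abel_nf
      _ ≤ lam * lipConst φ * dist x z + lipConst F * dist x z :=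
          (norm_add_le _ _).trans (add_le_add hAφ (hF x z))
      _ = (lam * lipConst φ + lipConst F) * dist x z := by ring
  rw [inv_mul_eq_div, le_div_iff₀ (sub_pos.2 H.lam_lt_one)]
  linarith

lemma norm_one_sub_integral_mul_norm_le [CompleteSpace Y] (H : LipContraction μ f g lam)
    {φ : X → Y} {K : NNReal} (hφ : LipschitzWith K φ) (x : X) :
    ‖1 - ∫ ω, g ω ∂μ‖ * ‖φ x‖ ≤
      lipConst φ * ∫ ω, ‖g ω‖ * dist (f x ω) x ∂μ + ‖(φ - transferOp μ f g φ) x‖ := by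
  have hsplit : (1 - ∫ ω, g ω ∂μ) • φ x =
      (φ - transferOp μ f g φ) x + ∫ ω, g ω • (φ (f x ω) - φ x) ∂μ := by
    simp only [smul_sub, transferOp, Pi.sub_apply]
    rw [integral_sub (H.integrable_smul_comp hφ x) (H.integrable.smul_const _),
      integral_smul_const, sub_smul, one_smul]
    abel
  rw [← norm_smul, hsplit, add_comm (lipConst φ * _)]
  exact (norm_add_le _ _).trans (add_le_add le_rfl
    (norm_integral_smul_sub_le hφ.norm_sub_le_lipConst_mul (H.integrable_dist x)))

lemma sub_transferOp_add (H : LipContraction μ f g lam) {φ ψ : X → Y} {K₁ K₂ : NNReal}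
    (hφ : LipschitzWith K₁ φ) (hψ : LipschitzWith K₂ ψ) :
    φ + ψ - transferOp μ f g (φ + ψ) = (φ - transferOp μ f g φ) + (ψ - transferOp μ f g ψ) := by
  rw [H.transferOp_add hφ hψ]
  abel

lemma eq_of_sub_transferOp_eq [CompleteSpace Y] (H : LipContraction μ f g lam)
    (hγ : ∫ ω, g ω ∂μ ≠ 1) {φ ψ : X → Y} {K₁ K₂ : NNReal} (hφ : LipschitzWith K₁ φ)
    (hψ : LipschitzWith K₂ ψ) (h : φ - transferOp μ f g φ = ψ - transferOp μ f g ψ) : φ = ψ := by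
  have hχ : LipschitzWith (K₁ + K₂) (φ - ψ) := hφ.sub hψ
  have hres : (φ - ψ) - transferOp μ f g (φ - ψ) = 0 := by
    rw [H.transferOp_sub hφ hψ, sub_sub_sub_comm, h, sub_self]
  have hL : lipConst (φ - ψ) = 0 := by
    have := H.lipConst_le_lipConst_sub_transferOp hχ
    rw [hres, lipConst_zero, mul_zero] at this
    exact le_antisymm this (lipConst_nonneg _)
  funext x
  have := H.norm_one_sub_integral_mul_norm_le hχ x
  rw [hres, hL, zero_mul, zero_add, Pi.zero_apply, norm_zero] at this
  have hpos : 0 < ‖1 - ∫ ω, g ω ∂μ‖ := norm_pos_iff.2 (sub_ne_zero.2 hγ.symm)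
  exact sub_eq_zero.1 (norm_le_zero_iff.1 (nonpos_of_mul_nonpos_right this hpos))

lemma norm_add_lipConst_le [CompleteSpace Y] (H : LipContraction μ f g lam)
    (hγ : ∫ ω, g ω ∂μ ≠ 1) {φ : X → Y} {K : NNReal} (hφ : LipschitzWith K φ) (x₀ : X) :
    ‖φ x₀‖ + lipConst φ ≤
      max 1 ((1 - lam)⁻¹ * ((∫ ω, ‖g ω‖ * dist (f x₀ ω) x₀ ∂μ) + 1 + ‖∫ ω, g ω ∂μ‖)) /
        ‖1 - ∫ ω, g ω ∂μ‖ *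
        (‖(φ - transferOp μ f g φ) x₀‖ + lipConst (φ - transferOp μ f g φ)) := by
  have hval := H.norm_one_sub_integral_mul_norm_le hφ x₀
  have hLip := H.lipConst_le_lipConst_sub_transferOp hφ
  set γ := ∫ ω, g ω ∂μ
  set I := ∫ ω, ‖g ω‖ * dist (f x₀ ω) x₀ ∂μ
  set F := φ - transferOp μ f g φ
  set c₀ := (1 - lam)⁻¹ * (I + 1 + ‖γ‖)
  have hd : 0 < ‖1 - γ‖ := norm_pos_iff.2 (sub_ne_zero.2 hγ.symm)
  have hγ' : ‖1 - γ‖ ≤ 1 + ‖γ‖ := (norm_sub_le _ _).trans_eq (by rw [norm_one])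
  have hL := lipConst_nonneg φ
  have hLF := lipConst_nonneg F
  rw [div_mul_eq_mul_div, le_div_iff₀ hd]
  calc (‖φ x₀‖ + lipConst φ) * ‖1 - γ‖
      ≤ ‖F x₀‖ + lipConst φ * (I + 1 + ‖γ‖) := by
        linarith [mul_le_mul_of_nonneg_left hγ' hL]
    _ ≤ ‖F x₀‖ + c₀ * lipConst F := by
        have : lipConst φ * (I + 1 + ‖γ‖) ≤ (1 - lam)⁻¹ * lipConst F * (I + 1 + ‖γ‖) :=
          mul_le_mul_of_nonneg_right hLip (by positivity)
        linarith
    _ ≤ max 1 c₀ * (‖F x₀‖ + lipConst F) := by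
        nlinarith [le_max_left 1 c₀, le_max_right 1 c₀, norm_nonneg (F x₀)]

end LipContraction

end

/-- Theorem 4.1(i): the solution operator F ↦ φ^F is a linear bijection of
Lip(X,Y) onto itself with ‖φ^F‖_Lip ≤ c/|1−γ| ‖F‖_Lip; in particular it is a
homeomorphism of (Lip(X,Y), ‖·‖_Lip) onto itself. -/
theorem stmt_12 {Ω : Type*} [MeasurableSpace Ω] (μ : MeasureTheory.Measure Ω)
    {X : Type*} [MetricSpace X] [TopologicalSpace.SeparableSpace X]
    [MeasurableSpace X] [BorelSpace X]
    {𝕂 : Type*} [RCLike 𝕂]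
    {Y : Type*} [NormedAddCommGroup Y] [NormedSpace 𝕂 Y] [NormedSpace ℝ Y] [CompleteSpace Y]
    (f : X → Ω → X) (g : Ω → 𝕂)
    (hf : ∀ x, Measurable (f x))
    (hg : Integrable g μ)
    (hint : ∀ x, Integrable (fun ω => ‖g ω‖ * dist (f x ω) x) μ)
    (lam : ℝ) (hlam : lam ∈ Set.Ico (0 : ℝ) 1)
    (hcontr : ∀ x z : X, (∫ ω, ‖g ω‖ * dist (f x ω) (f z ω) ∂μ) ≤ lam * dist x z)
    (γ : 𝕂) (hγ : γ = ∫ ω, g ω ∂μ) (hγ1 : γ ≠ 1)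
    (x₀ : X)
    (c₀ c : ℝ)
    (hc₀ : c₀ = (1 - lam)⁻¹ * ((∫ ω, ‖g ω‖ * dist (f x₀ ω) x₀ ∂μ) + 1 + ‖γ‖))
    (hc : c = max 1 c₀)
    (T : (X → Y) → X → Y)
    (hT : ∀ F : X → Y, (∃ K : NNReal, LipschitzWith K F) →
      ((∃ K : NNReal, LipschitzWith K (T F)) ∧
        ∀ x, Integrable (fun ω => g ω • T F (f x ω)) μ ∧
          T F x = (∫ ω, g ω • T F (f x ω) ∂μ) + F x)) :
    (∀ F G : X → Y, (∃ K : NNReal, LipschitzWith K F) → (∃ K : NNReal, LipschitzWith K G) →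
      T (F + G) = T F + T G) ∧
    (∀ (a : 𝕂) (F : X → Y), (∃ K : NNReal, LipschitzWith K F) → T (a • F) = a • T F) ∧
    (∀ F G : X → Y, (∃ K : NNReal, LipschitzWith K F) → (∃ K : NNReal, LipschitzWith K G) →
      T F = T G → F = G) ∧
    (∀ ψ : X → Y, (∃ K : NNReal, LipschitzWith K ψ) →
      ∃ F : X → Y, (∃ K : NNReal, LipschitzWith K F) ∧ T F = ψ) ∧
    (∀ F : X → Y, (∃ K : NNReal, LipschitzWith K F) →
      ‖T F x₀‖ + lipConst (T F) ≤ c / ‖1 - γ‖ * (‖F x₀‖ + lipConst F)) := by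
  have H : LipContraction μ f g lam := ⟨hf, hg, hint, hlam.1, hlam.2, hcontr⟩
  subst hγ hc₀ hc
  have hTsol : ∀ F : X → Y, (∃ K : NNReal, LipschitzWith K F) →
      (∃ K : NNReal, LipschitzWith K (T F)) ∧ T F - transferOp μ f g (T F) = F :=
    fun F hF => ⟨(hT F hF).1, funext fun x => sub_eq_of_eq_add' ((hT F hF).2 x).2⟩
  refine ⟨?_, ?_, ?_, ?_, ?_⟩
  · rintro F G ⟨K₁, hF⟩ ⟨K₂, hG⟩
    obtain ⟨⟨_, hTFG⟩, hFG⟩ := hTsol (F + G) ⟨_, hF.add hG⟩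
    obtain ⟨⟨_, hTF⟩, hF'⟩ := hTsol F ⟨_, hF⟩
    obtain ⟨⟨_, hTG⟩, hG'⟩ := hTsol G ⟨_, hG⟩
    refine H.eq_of_sub_transferOp_eq hγ1 hTFG (hTF.add hTG) ?_
    rw [H.sub_transferOp_add hTF hTG, hF', hG', hFG]
  · rintro a F ⟨K, hF⟩
    obtain ⟨⟨_, hTaF⟩, haF⟩ := hTsol (a • F) ⟨_, (lipschitzWith_smul a).comp hF⟩
    obtain ⟨⟨_, hTF⟩, hF'⟩ := hTsol F ⟨_, hF⟩
    refine H.eq_of_sub_transferOp_eq hγ1 hTaF ((lipschitzWith_smul a).comp hTF) ?_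
    rw [smul_sub_transferOp, hF', haF]
  · intro F G hF hG hFG
    rw [← (hTsol F hF).2, ← (hTsol G hG).2, hFG]
  · rintro ψ ⟨K, hψ⟩
    have hF := H.lipschitzWith_sub_transferOp hψ
    obtain ⟨⟨_, hTF⟩, hF'⟩ := hTsol _ ⟨_, hF⟩
    exact ⟨_, ⟨_, hF⟩, H.eq_of_sub_transferOp_eq hγ1 hTF hψ hF'⟩
  · intro F hF
    obtain ⟨⟨_, hTF⟩, hF'⟩ := hTsol F hF
    simpa only [hF'] using H.norm_add_lipConst_le hγ1 hTF x₀
end
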